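/- Let V be an n-dimensional real vector space with a nondegenerate symmetric bilinear form ⟨·,·⟩, let 1 ≤ p ≤ n−1, and let α ∈ Λ^pV* be a decomposable p-form with ⟨α,α⟩ ≠ 0 (so the corresponding p-dimensional subspace U ⊂ V is nondegenerate). Let A, B ∈ V and suppose that for every X ∈ V: (1/(p+1))·⟨ι_X(A♭∧α), α⟩ − (1/(n−p+1))·⟨X♭∧(ι_B α), α⟩ = 0. Then A♭ ∧ α = 0 and ι_B α = 0. -/
import Mathlib


set_option synthInstance.maxHeartbeats 1000000
set_option maxHeartbeats 1000000

/-- The algebra of exterior forms on `V`: the exterior algebra of the dual space `V*`. -/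
abbrev FormAlg (V : Type*) [AddCommGroup V] [Module ℝ V] : Type _ :=
  ExteriorAlgebra ℝ (Module.Dual ℝ V)

variable {V : Type*} [AddCommGroup V] [Module ℝ V]

/-- Interior product (contraction) `ι_v` of a vector `v` into forms. -/
noncomputable def iprod (v : V) (α : FormAlg V) : FormAlg V :=
  CliffordAlgebra.contractLeft (Q := (0 : QuadraticForm ℝ (Module.Dual ℝ V)))
    (Module.Dual.eval ℝ V v) α

/-- The metric dual (musical `♭`) of a vector. -/
noncomputable def flat (g : LinearMap.BilinForm ℝ V) (v : V) : Module.Dual ℝ V := g v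

/-- Wedge product of a covector with a form. -/
noncomputable def cwedge (f : Module.Dual ℝ V) (α : FormAlg V) : FormAlg V :=
  ExteriorAlgebra.ι ℝ (M := Module.Dual ℝ V) f * α

/-- Wedge product `v♭ ∧ α` of the metric dual of a vector with a form. -/
noncomputable def flatWedge (g : LinearMap.BilinForm ℝ V) (v : V) (α : FormAlg V) :
    FormAlg V :=
  cwedge (flat g v) α

/-- The decomposable form `x₁♭ ∧ ⋯ ∧ x_p♭`. -/
noncomputable def flatMulti (g : LinearMap.BilinForm ℝ V) (p : ℕ) (x : Fin p → V) :
    FormAlg V :=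
  ExteriorAlgebra.ιMulti ℝ p (M := Module.Dual ℝ V) (fun i => flat g (x i))

/-- Wedge product of two forms. -/
noncomputable def wedgeF (α β : FormAlg V) : FormAlg V := α * β

lemma flatMulti_succ (g : LinearMap.BilinForm ℝ V) (m : ℕ) (y : Fin (m+1) → V) :
    flatMulti g (m+1) y
      = ExteriorAlgebra.ι ℝ (flat g (y 0)) * flatMulti g m (fun i => y i.succ) := by
  unfold flatMulti
  rw [ExteriorAlgebra.ιMulti_succ_apply]
  rfl

lemma flatMulti_cons (g : LinearMap.BilinForm ℝ V) (m : ℕ) (v : V) (x : Fin m → V) :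
    flatMulti g (m+1) (Fin.cons v x)
      = ExteriorAlgebra.ι ℝ (flat g v) * flatMulti g m x := by
  rw [flatMulti_succ]
  simp [Fin.cons_succ]

lemma iprod_flatMulti (g : LinearMap.BilinForm ℝ V) (v : V) :
    ∀ (m : ℕ) (y : Fin (m+1) → V),
    iprod v (flatMulti g (m+1) y)
      = ∑ j : Fin (m+1), ((-1:ℝ)^(j:ℕ) * g (y j) v)
          • flatMulti g m (fun i => y (j.succAbove i)) := by
  intro m
  induction m with
  | zero =>
    intro y
    rw [flatMulti_succ]
    unfold iprod
    rw [CliffordAlgebra.contractLeft_ι_mul]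
    have h0 : flatMulti g 0 (fun i => y (Fin.succ i)) = 1 := by
      unfold flatMulti; exact ExteriorAlgebra.ιMulti_zero_apply _
    have h1 : ∀ x : Fin 0 → V, flatMulti g 0 x = 1 := by
      intro x; unfold flatMulti; exact ExteriorAlgebra.ιMulti_zero_apply _
    rw [h0, CliffordAlgebra.contractLeft_one, mul_zero, sub_zero]
    rw [Fin.sum_univ_one, h1]
    simp [flat]
  | succ m ih =>
    intro y
    rw [flatMulti_succ]
    unfold iprod
    rw [CliffordAlgebra.contractLeft_ι_mul]
    have ihy := ih (fun i => y i.succ)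
    unfold iprod at ihy
    rw [ihy, Finset.mul_sum]
    have key : ∀ j : Fin (m+1),
        (CliffordAlgebra.ι (0 : QuadraticForm ℝ (Module.Dual ℝ V))) (flat g (y 0)) *
          (((-1:ℝ)^(j:ℕ) * g (y j.succ) v) • flatMulti g m (fun i => y (j.succAbove i).succ))
        = ((-1:ℝ)^(j:ℕ) * g (y j.succ) v)
            • flatMulti g (m+1) (fun i => y (j.succ.succAbove i)) := by
      intro j
      rw [mul_smul_comm]
      congr 1
      have hfam : (fun i : Fin (m+1) => y (j.succ.succAbove i))
          = Fin.cons (y 0) (fun i => y (j.succAbove i).succ) := by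
        funext i
        refine Fin.cases ?_ (fun i' => ?_) i
        · simp
        · simp [Fin.succ_succAbove_succ]
      rw [hfam, flatMulti_cons]
    simp only [key]
    conv_rhs => rw [Fin.sum_univ_succ]
    rw [sub_eq_add_neg]
    congr 1
    · have hz : (fun i => y (Fin.succAbove 0 i)) = fun i => y i.succ := by
        funext i; rw [Fin.succAbove_zero]
      rw [hz]
      simp [flat]
    · rw [← Finset.sum_neg_distrib]
      refine Finset.sum_congr rfl fun j _ => ?_
      rw [← neg_smul]
      congr 1
      simp only [Fin.val_succ, pow_succ]
      ring

lemma flatMulti_eq_zero_of_eq (g : LinearMap.BilinForm ℝ V) (m : ℕ) (x : Fin m → V)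
    {i j : Fin m} (h : x i = x j) (hij : i ≠ j) : flatMulti g m x = 0 :=
  AlternatingMap.map_eq_zero_of_eq _ _ (by rw [h]) hij

lemma flatMulti_eq_zero_of_not_li (g : LinearMap.BilinForm ℝ V) (m : ℕ) (x : Fin m → V)
    (h : ¬ LinearIndependent ℝ fun i => flat g (x i)) : flatMulti g m x = 0 :=
  AlternatingMap.map_linearDependent _ _ h


/-- Pointwise core of the parallelism lemma for decomposable conformal Killing forms.
Let `α = u₁♭∧⋯∧u_p♭` be a decomposable `p`-form (`1 ≤ p ≤ n-1`) of nonzero length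
`⟨α,α⟩ ≠ 0` on the `n`-dimensional space `V`, let `Bp` be the induced inner product on
`p`-forms, and let `A, B₀ ∈ V`.  If for every `X ∈ V`
`(1/(p+1))·⟨ι_X(A♭∧α), α⟩ - (1/(n-p+1))·⟨X♭∧(ι_{B₀}α), α⟩ = 0`,
then `A♭ ∧ α = 0` and `ι_{B₀} α = 0`. -/
theorem stmt_15 [FiniteDimensional ℝ V]
    (n p : ℕ) (hdim : Module.finrank ℝ V = n) (hp : 1 ≤ p) (hpn : p ≤ n - 1)
    (g : LinearMap.BilinForm ℝ V) (hsymm : g.IsSymm) (hnd : g.Nondegenerate)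
    (Bp : FormAlg V →ₗ[ℝ] FormAlg V →ₗ[ℝ] ℝ)
    (hBp : ∀ x y : Fin p → V,
      Bp (flatMulti g p x) (flatMulti g p y)
        = Matrix.det (Matrix.of fun i j => g (x i) (y j)))
    (α : FormAlg V) (hdec : ∃ u : Fin p → V, α = flatMulti g p u)
    (hlen : Bp α α ≠ 0)
    (A B₀ : V)
    (hyp : ∀ X : V,
      (1 / ((p : ℝ) + 1)) * Bp (iprod X (flatWedge g A α)) α
        - (1 / ((n : ℝ) - (p : ℝ) + 1)) * Bp (flatWedge g X (iprod B₀ α)) α = 0) :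
    flatWedge g A α = 0 ∧ iprod B₀ α = 0 := by
  obtain ⟨u, rfl⟩ := hdec
  obtain ⟨q, rfl⟩ : ∃ q, p = q + 1 := ⟨p - 1, (Nat.succ_pred_eq_of_pos hp).symm⟩
  have hn2 : q + 2 ≤ n := by omega
  have hden : (0:ℝ) < (n : ℝ) - ((q:ℝ) + 1) + 1 := by
    have : ((q:ℝ) + 2) ≤ (n:ℝ) := by exact_mod_cast hn2
    linarith
  -- wedging with the dual of a vector gives a (q+2)-fold product
  have hwedge_cons : ∀ v : V,
      flatWedge g v (flatMulti g (q+1) u) = flatMulti g (q+2) (Fin.cons v u) :=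
    fun v => (flatMulti_cons g (q+1) v u).symm
  -- wedging with a `u k` kills α
  have hul : ∀ k : Fin (q+1), flatWedge g (u k) (flatMulti g (q+1) u) = 0 := by
    intro k
    rw [hwedge_cons]
    refine flatMulti_eq_zero_of_eq g _ _ (i := 0) (j := k.succ) ?_ (Fin.succ_ne_zero k).symm
    simp
  -- the recombination identity: u_k♭ ∧ (ι_{B₀} α) = g(u_k, B₀) • α
  have hBrec : ∀ k : Fin (q+1),
      flatWedge g (u k) (iprod B₀ (flatMulti g (q+1) u))
        = (g (u k) B₀) • flatMulti g (q+1) u := by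
    intro k
    have h := CliffordAlgebra.contractLeft_ι_mul
      (Q := (0 : QuadraticForm ℝ (Module.Dual ℝ V)))
      (d := Module.Dual.eval ℝ V B₀) (flat g (u k)) (flatMulti g (q+1) u)
    have h0 : (CliffordAlgebra.ι (0 : QuadraticForm ℝ (Module.Dual ℝ V))) (flat g (u k)) *
        flatMulti g (q+1) u = 0 := hul k
    rw [h0, map_zero] at h
    have h2 := (sub_eq_zero.mp h.symm).symm
    exact h2
  -- the expansion of Bp (ι_X (v♭ ∧ α)) α
  have hexp : ∀ (X v : V),
      Bp (iprod X (flatWedge g v (flatMulti g (q+1) u))) (flatMulti g (q+1) u)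
        = ∑ j : Fin (q+2), (-1:ℝ)^(j:ℕ) * g ((Fin.cons v u : Fin (q+2) → V) j) X *
            Bp (flatMulti g (q+1) (fun i => (Fin.cons v u : Fin (q+2) → V) (j.succAbove i)))
              (flatMulti g (q+1) u) := by
    intro X v
    rw [hwedge_cons, iprod_flatMulti]
    simp only [map_sum, map_smul, LinearMap.sum_apply, LinearMap.smul_apply, smul_eq_mul]
  -- the first term vanishes on X = u k  (duplicate column in the Gram determinant)
  have hT1 : ∀ k : Fin (q+1),
      Bp (iprod (u k) (flatWedge g A (flatMulti g (q+1) u))) (flatMulti g (q+1) u) = 0 := by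
    intro k
    rw [hexp (u k) A]
    set M : Matrix (Fin (q+2)) (Fin (q+2)) ℝ :=
      Matrix.of fun i m => g ((Fin.cons A u : Fin (q+2) → V) i) ((Fin.cons (u k) u : Fin (q+2) → V) m) with hM
    have hsub : ∀ j : Fin (q+2),
        Bp (flatMulti g (q+1) (fun i => (Fin.cons A u : Fin (q+2) → V) (j.succAbove i))) (flatMulti g (q+1) u)
          = Matrix.det (M.submatrix j.succAbove Fin.succ) := by
      intro j
      rw [hBp]
      congr 1
    have hzero : Matrix.det M = 0 := by
      refine Matrix.det_zero_of_column_eq (i := 0) (j := k.succ) (Fin.succ_ne_zero k).symm ?_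
      intro r
      simp [hM, Fin.cons_succ]
    rw [← hzero, Matrix.det_succ_column_zero]
    refine Finset.sum_congr rfl fun j _ => ?_
    rw [hsub j]
    have : M j 0 = (g ((Fin.cons A u : Fin (q+2) → V) j)) (u k) := by simp [hM]
    rw [this]
  -- hence all coefficients g (u k) B₀ vanish
  have hcB : ∀ k : Fin (q+1), g (u k) B₀ = 0 := by
    intro k
    have h := hyp (u k)
    rw [hT1 k, hBrec k] at h
    simp only [map_smul, LinearMap.smul_apply, smul_eq_mul, mul_zero, zero_sub,
      neg_eq_zero, Nat.cast_add, Nat.cast_one] at h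
    rcases mul_eq_zero.mp h with h1 | h1
    · exact absurd h1 (one_div_ne_zero hden.ne')
    · rcases mul_eq_zero.mp h1 with h2 | h2
      · exact h2
      · exact absurd h2 hlen
  -- hence ι_{B₀} α = 0
  have hB0 : iprod B₀ (flatMulti g (q+1) u) = 0 := by
    rw [iprod_flatMulti]
    refine Finset.sum_eq_zero fun j _ => ?_
    rw [hcB j]
    simp
  refine ⟨?_, hB0⟩
  -- now the hypothesis says Bp (ι_X (A♭∧α)) α = 0 for all X
  have hA : ∀ X : V,
      Bp (iprod X (flatWedge g A (flatMulti g (q+1) u))) (flatMulti g (q+1) u) = 0 := by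
    intro X
    have h := hyp X
    have hw0 : flatWedge g X (iprod B₀ (flatMulti g (q+1) u)) = 0 := by
      rw [hB0]
      show ExteriorAlgebra.ι ℝ (flat g X) * 0 = 0
      rw [mul_zero]
    rw [hw0] at h
    simp only [map_zero, LinearMap.zero_apply, mul_zero, sub_zero] at h
    rcases mul_eq_zero.mp h with h1 | h1
    · exfalso
      have : ((q:ℝ) + 1 + 1) > 0 := by positivity
      exact (one_div_ne_zero this.ne') (by exact_mod_cast h1)
    · exact h1
  -- linear dependence of the covectors flat g (Fin.cons A u i)
  set c : Fin (q+2) → ℝ := fun j =>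
    (-1:ℝ)^(j:ℕ) * Bp (flatMulti g (q+1) (fun i => (Fin.cons A u : Fin (q+2) → V) (j.succAbove i)))
      (flatMulti g (q+1) u) with hc
  have hφ : (∑ j : Fin (q+2), c j • flat g ((Fin.cons A u : Fin (q+2) → V) j)) = 0 := by
    apply LinearMap.ext
    intro X
    have h := hA X
    rw [hexp X A] at h
    simp only [LinearMap.sum_apply, LinearMap.smul_apply, LinearMap.zero_apply, smul_eq_mul, hc]
    rw [← h]
    refine Finset.sum_congr rfl fun j _ => ?_
    show ((-1:ℝ)^(j:ℕ) * _) * ((g ((Fin.cons A u : Fin (q+2) → V) j))) X = _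
    ring
  have hc0 : c 0 = Bp (flatMulti g (q+1) u) (flatMulti g (q+1) u) := by
    have hu0 : (fun i : Fin (q+1) => (Fin.cons A u : Fin (q+2) → V) ((0 : Fin (q+2)).succAbove i)) = u := by
      funext i
      simp
    rw [hc]
    simp [hu0]
  have hdep : ¬ LinearIndependent ℝ (fun j => flat g ((Fin.cons A u : Fin (q+2) → V) j)) := by
    intro hLI
    have h0 := Fintype.linearIndependent_iff.mp hLI c hφ 0
    rw [hc0] at h0
    exact hlen h0
  rw [hwedge_cons A]
  exact flatMulti_eq_zero_of_not_li g _ _ hdep
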